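/- Define the real 3×3 matrices A = [[4,−1,−1],[−1,4,0],[−1,0,4]], B = [[1/2,0,0],[1/2,0,0],[−1/2,0,0]], C₀ = [[3/2,−1,−1],[−1,5/4,1/4],[−1,1/4,5/4]], R₀ = [[1/2,3/4,1/4],[1/2,1/4,3/4],[0,0,0]]. Let a > 0, K > 0, and for each α ∈ (0,a) let C(α) and R(α) be real 3×3 matrices with C(α) symmetric, such that every entry of α·C(α) − C₀ and of R(α) − R₀ has absolute value at most K·α. Define S̃(α) = [[A, B],[Bᵀ, C(α)]], E(α) = [[I, −R(α)],[0, I]], and S(α) = E(α) S̃(α) E(α)ᵀ. Then there exists α₀ ∈ (0,a] such that for all α ∈ (0,α₀) the matrix S(α) is invertible and S(α)^{-1} is entrywise positive. -/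

import Mathlib

open Matrix

/-- The block `A` of the stiffness matrix. -/
noncomputable def Amat : Matrix (Fin 3) (Fin 3) ℝ :=
  !![4, -1, -1; -1, 4, 0; -1, 0, 4]

/-- The block `B` of the stiffness matrix. -/
noncomputable def Bmat : Matrix (Fin 3) (Fin 3) ℝ :=
  !![1/2, 0, 0; 1/2, 0, 0; -1/2, 0, 0]

/-- The leading term `C₀` of `α·C(α)`. -/
noncomputable def C0mat : Matrix (Fin 3) (Fin 3) ℝ :=
  !![3/2, -1, -1; -1, 5/4, 1/4; -1, 1/4, 5/4]

/-- The limit `R₀` of the change-of-basis block `R(α)`. -/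
noncomputable def R0mat : Matrix (Fin 3) (Fin 3) ℝ :=
  !![1/2, 3/4, 1/4; 1/2, 1/4, 3/4; 0, 0, 0]

/-- The stiffness matrix in the hierarchical basis. -/
noncomputable def Stilde (C : ℝ → Matrix (Fin 3) (Fin 3) ℝ) (t : ℝ) :
    Matrix (Fin 3 ⊕ Fin 3) (Fin 3 ⊕ Fin 3) ℝ :=
  Matrix.fromBlocks Amat Bmat Bmatᵀ (C t)

/-- The change-of-basis matrix. -/
noncomputable def Emat (R : ℝ → Matrix (Fin 3) (Fin 3) ℝ) (t : ℝ) :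
    Matrix (Fin 3 ⊕ Fin 3) (Fin 3 ⊕ Fin 3) ℝ :=
  Matrix.fromBlocks 1 (-(R t)) 0 1

/-- The stiffness matrix in the nodal basis. -/
noncomputable def Smat (C R : ℝ → Matrix (Fin 3) (Fin 3) ℝ) (t : ℝ) :
    Matrix (Fin 3 ⊕ Fin 3) (Fin 3 ⊕ Fin 3) ℝ :=
  Emat R t * Stilde C t * (Emat R t)ᵀ

/-!
Right-multiplying `S̃(α)` by `D(α) = diag(I, α I)` gives `[[A, α B], [Bᵀ, α C(α)]]`, which
converges to the invertible `M₀ = [[A, 0], [Bᵀ, C₀]]`. Hence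
`S(α)⁻¹ = E(α)⁻ᵀ D(α) (S̃(α) D(α))⁻¹ E(α)⁻¹` converges to
`T₀ = E₀⁻ᵀ D(0) M₀⁻¹ E₀⁻¹ = [[A⁻¹, A⁻¹ R₀], [R₀ᵀ A⁻¹, R₀ᵀ A⁻¹ R₀]]`. This limit is entrywise
positive because `A⁻¹` is, and `R₀` is nonnegative with a positive first row; entrywise
positivity then persists for small `α`.
-/

open Filter Topology

section

variable {ι κ β α : Type*}

theorem Matrix.mul_apply_pos [Fintype ι] [Semiring α] [PartialOrder α] [IsStrictOrderedRing α]
    {A : Matrix κ ι α} {B : Matrix ι β α} {i : κ} {j : β}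
    (hA : ∀ k, 0 ≤ A i k) (hB : ∀ k, 0 ≤ B k j) (k : ι) (hAk : 0 < A i k) (hBk : 0 < B k j) :
    0 < (A * B) i j :=
  Finset.sum_pos' (fun k _ => mul_nonneg (hA k) (hB k)) ⟨k, Finset.mem_univ k, mul_pos hAk hBk⟩

theorem Matrix.isUnit_of_inv_apply_ne_zero [Fintype ι] [DecidableEq ι] [CommRing α]
    {A : Matrix ι ι α} {i j : ι} (h : A⁻¹ i j ≠ 0) : IsUnit A := by
  rw [Matrix.isUnit_iff_isUnit_det]
  by_contra hA
  simp [Matrix.nonsing_inv_apply_not_isUnit A hA] at h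

theorem Filter.Tendsto.matrix_inv [Fintype ι] [DecidableEq ι] [Field α] [TopologicalSpace α]
    [IsTopologicalRing α] [ContinuousInv₀ α] {l : Filter β}
    {F : β → Matrix ι ι α} {A : Matrix ι ι α} (hF : Tendsto F l (𝓝 A)) (hA : A.det ≠ 0) :
    Tendsto (fun x => (F x)⁻¹) l (𝓝 A⁻¹) :=
  have hinv : ContinuousAt Ring.inverse A.det := by
    rw [Ring.inverse_eq_inv']
    exact continuousAt_inv₀ hA
  (continuousAt_matrix_inv A hinv).tendsto.comp hF

theorem Filter.Tendsto.eventually_forall_matrix_apply_pos [Finite ι] [Finite κ] [Zero α]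
    [LinearOrder α] [TopologicalSpace α] [OrderTopology α]
    {l : Filter β} {F : β → Matrix ι κ α} {L : Matrix ι κ α}
    (hF : Tendsto F l (𝓝 L)) (hL : ∀ i j, 0 < L i j) : ∀ᶠ x in l, ∀ i j, 0 < F x i j := by
  simp only [eventually_all]
  intro i j
  exact (tendsto_pi_nhds.1 (tendsto_pi_nhds.1 hF i) j).eventually_const_lt (hL i j)

theorem Matrix.tendsto_nhdsGT_of_abs_sub_le {F : ℝ → Matrix ι κ ℝ} {L : Matrix ι κ ℝ}
    {K a : ℝ} (ha : 0 < a) (h : ∀ t, 0 < t → t < a → ∀ i j, |F t i j - L i j| ≤ K * t) :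
    Tendsto F (𝓝[>] 0) (𝓝 L) := by
  refine tendsto_pi_nhds.2 fun i => tendsto_pi_nhds.2 fun j => ?_
  have hKt : Tendsto (fun t : ℝ => K * t) (𝓝[>] 0) (𝓝 0) := by
    simpa using ((continuous_const_mul K).tendsto 0).mono_left nhdsWithin_le_nhds
  refine tendsto_iff_norm_sub_tendsto_zero.2 (squeeze_zero_norm' ?_ hKt)
  filter_upwards [Ioo_mem_nhdsGT ha] with t ht
  simpa using h t ht.1 ht.2 i j

theorem exists_forall_Ioo_of_eventually_nhdsGT {p : ℝ → Prop} {a : ℝ} (ha : 0 < a)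
    (h : ∀ᶠ t in 𝓝[>] 0, p t) : ∃ α₀, 0 < α₀ ∧ α₀ ≤ a ∧ ∀ t, 0 < t → t < α₀ → p t := by
  obtain ⟨u, hu, hsub⟩ := mem_nhdsGT_iff_exists_Ioo_subset.1 h
  exact ⟨min u a, lt_min hu ha, min_le_right u a,
    fun t ht₀ ht => hsub ⟨ht₀, ht.trans_le (min_le_left u a)⟩⟩

end

theorem Amat_inv : Amat⁻¹ = !![2/7, 1/14, 1/14; 1/14, 15/56, 1/56; 1/14, 1/56, 15/56] := by
  refine inv_eq_right_inv ?_
  ext i j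
  fin_cases i <;> fin_cases j <;> simp [Amat, mul_apply, Fin.sum_univ_three] <;> norm_num

theorem Amat_inv_pos (i j : Fin 3) : 0 < Amat⁻¹ i j := by
  rw [Amat_inv]
  fin_cases i <;> fin_cases j <;> norm_num

theorem R0mat_nonneg (i j : Fin 3) : 0 ≤ R0mat i j := by
  fin_cases i <;> fin_cases j <;> norm_num [R0mat]

theorem R0mat_zero_pos (j : Fin 3) : 0 < R0mat 0 j := by
  fin_cases j <;> norm_num [R0mat]

theorem det_Amat : Amat.det = 56 := by
  simp [Amat, det_fin_three]; norm_num

theorem det_C0mat : C0mat.det = 1 / 4 := by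
  simp [C0mat, det_fin_three]; norm_num

noncomputable def scaleLower (t : ℝ) : Matrix (Fin 3 ⊕ Fin 3) (Fin 3 ⊕ Fin 3) ℝ :=
  fromBlocks 1 0 0 (t • 1)

noncomputable def M0mat : Matrix (Fin 3 ⊕ Fin 3) (Fin 3 ⊕ Fin 3) ℝ :=
  fromBlocks Amat 0 Bmatᵀ C0mat

noncomputable def E0mat : Matrix (Fin 3 ⊕ Fin 3) (Fin 3 ⊕ Fin 3) ℝ :=
  fromBlocks 1 (-R0mat) 0 1

noncomputable def T0mat : Matrix (Fin 3 ⊕ Fin 3) (Fin 3 ⊕ Fin 3) ℝ :=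
  fromBlocks Amat⁻¹ (Amat⁻¹ * R0mat) (R0matᵀ * Amat⁻¹) (R0matᵀ * Amat⁻¹ * R0mat)

theorem det_M0mat : M0mat.det ≠ 0 := by
  rw [M0mat, det_fromBlocks_zero₁₂, det_Amat, det_C0mat]
  norm_num

theorem det_E0mat : E0mat.det = 1 := by
  simp [E0mat]

theorem E0mat_inv : E0mat⁻¹ = fromBlocks 1 R0mat 0 1 := by
  refine inv_eq_right_inv ?_
  simp [E0mat, fromBlocks_multiply, fromBlocks_one]

theorem T0mat_eq : (E0matᵀ)⁻¹ * scaleLower 0 * M0mat⁻¹ * E0mat⁻¹ = T0mat := by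
  have hA : IsUnit Amat := (isUnit_iff_isUnit_det _).2 (by simp [det_Amat])
  have hC : IsUnit C0mat := (isUnit_iff_isUnit_det _).2 (by simp [det_C0mat])
  rw [← transpose_nonsing_inv, E0mat_inv, M0mat,
    inv_fromBlocks_zero₁₂_of_isUnit_iff _ _ _ (iff_of_true hA hC)]
  simp [scaleLower, T0mat, fromBlocks_transpose, fromBlocks_multiply, Matrix.mul_assoc]

theorem T0mat_pos (i j : Fin 3 ⊕ Fin 3) : 0 < T0mat i j := by
  have hAR (i j : Fin 3) : 0 < (Amat⁻¹ * R0mat) i j :=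
    mul_apply_pos (fun k => (Amat_inv_pos i k).le) (fun k => R0mat_nonneg k j) 0
      (Amat_inv_pos i 0) (R0mat_zero_pos j)
  have hRA (i j : Fin 3) : 0 < (R0matᵀ * Amat⁻¹) i j :=
    mul_apply_pos (fun k => R0mat_nonneg k i) (fun k => (Amat_inv_pos k j).le) 0
      (R0mat_zero_pos i) (Amat_inv_pos 0 j)
  rcases i with i | i <;> rcases j with j | j
  · exact Amat_inv_pos i j
  · exact hAR i j
  · exact hRA i j
  · exact mul_apply_pos (fun k => (hRA i k).le) (fun k => R0mat_nonneg k j) 0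
      (hRA i 0) (R0mat_zero_pos j)

theorem Stilde_mul_scaleLower (C : ℝ → Matrix (Fin 3) (Fin 3) ℝ) (t : ℝ) :
    Stilde C t * scaleLower t = fromBlocks Amat (t • Bmat) Bmatᵀ (t • C t) := by
  simp [Stilde, scaleLower, fromBlocks_multiply]

theorem Smat_inv_eq (C R : ℝ → Matrix (Fin 3) (Fin 3) ℝ) {t : ℝ} (ht : t ≠ 0) :
    (Smat C R t)⁻¹ =
      ((Emat R t)ᵀ)⁻¹ * scaleLower t * (Stilde C t * scaleLower t)⁻¹ * (Emat R t)⁻¹ := by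
  have hD : IsUnit (scaleLower t).det := by
    simp [scaleLower, det_fromBlocks_zero₂₁, ht]
  rw [Smat, Matrix.mul_inv_rev, Matrix.mul_inv_rev, Matrix.mul_inv_rev (Stilde C t),
    Matrix.mul_assoc _ (scaleLower t), mul_nonsing_inv_cancel_left _ _ hD, Matrix.mul_assoc]

theorem tendsto_Smat_inv {C R : ℝ → Matrix (Fin 3) (Fin 3) ℝ}
    (hC : Tendsto (fun t => t • C t) (𝓝[>] 0) (𝓝 C0mat))
    (hR : Tendsto R (𝓝[>] 0) (𝓝 R0mat)) :
    Tendsto (fun t => (Smat C R t)⁻¹) (𝓝[>] 0) (𝓝 T0mat) := by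
  have hE : Tendsto (Emat R) (𝓝[>] 0) (𝓝 E0mat) :=
    ((continuous_const.matrix_fromBlocks continuous_neg continuous_const
      continuous_const).tendsto R0mat).comp hR
  have hET : Tendsto (fun t => (Emat R t)ᵀ) (𝓝[>] 0) (𝓝 E0matᵀ) :=
    (continuous_id.matrix_transpose.tendsto _).comp hE
  have hD : Tendsto scaleLower (𝓝[>] 0) (𝓝 (scaleLower 0)) :=
    (continuous_const.matrix_fromBlocks continuous_const continuous_const
      (continuous_id.smul continuous_const)).continuousWithinAt
  have hM : Tendsto (fun t => Stilde C t * scaleLower t) (𝓝[>] 0) (𝓝 M0mat) := by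
    have hg : Continuous fun p : ℝ × Matrix (Fin 3) (Fin 3) ℝ =>
        fromBlocks Amat (p.1 • Bmat) Bmatᵀ p.2 :=
      continuous_const.matrix_fromBlocks (continuous_fst.smul continuous_const) continuous_const
        continuous_snd
    have ht : Tendsto (fun t : ℝ => t) (𝓝[>] 0) (𝓝 0) := nhdsWithin_le_nhds
    simpa [Stilde_mul_scaleLower, M0mat, Function.comp_def] using
      (hg.tendsto (0, C0mat)).comp (ht.prodMk_nhds hC)
  rw [← T0mat_eq]
  refine ((((hET.matrix_inv (by simp [det_E0mat])).mul hD).mul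
    (hM.matrix_inv det_M0mat)).mul (hE.matrix_inv (by simp [det_E0mat]))).congr' ?_
  filter_upwards [self_mem_nhdsWithin] with t ht
  exact (Smat_inv_eq C R (ne_of_gt ht)).symm

theorem inverse_stiffness_entrywise_pos_general
    (a K : ℝ) (ha : 0 < a)
    (C R : ℝ → Matrix (Fin 3) (Fin 3) ℝ)
    (hCapprox : ∀ t, 0 < t → t < a → ∀ i j, |t * C t i j - C0mat i j| ≤ K * t)
    (hRapprox : ∀ t, 0 < t → t < a → ∀ i j, |R t i j - R0mat i j| ≤ K * t) :
    ∃ α₀, 0 < α₀ ∧ α₀ ≤ a ∧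
      ∀ t, 0 < t → t < α₀ →
        IsUnit (Smat C R t) ∧ ∀ i j, 0 < (Smat C R t)⁻¹ i j := by
  have hC : Tendsto (fun t => t • C t) (𝓝[>] 0) (𝓝 C0mat) :=
    tendsto_nhdsGT_of_abs_sub_le ha (by simpa using hCapprox)
  have hR : Tendsto R (𝓝[>] 0) (𝓝 R0mat) := tendsto_nhdsGT_of_abs_sub_le ha hRapprox
  obtain ⟨α₀, hα₀, hα₀a, hpos⟩ := exists_forall_Ioo_of_eventually_nhdsGT ha
    ((tendsto_Smat_inv hC hR).eventually_forall_matrix_apply_pos T0mat_pos)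
  refine ⟨α₀, hα₀, hα₀a, fun t ht₀ ht => ⟨?_, hpos t ht₀ ht⟩⟩
  -- `M⁻¹` is `0` for a singular `M`, so a nonzero entry of `S(α)⁻¹` certifies invertibility.
  exact isUnit_of_inv_apply_ne_zero (hpos t ht₀ ht (.inl 0) (.inl 0)).ne'

/-- For all sufficiently small angles `α`, the stiffness matrix `S(α)` of the
patch containing a nearly degenerate triangulation is invertible with
entrywise positive inverse. -/
theorem inverse_stiffness_entrywise_pos
    (a K : ℝ) (ha : 0 < a) (hK : 0 < K)
    (C R : ℝ → Matrix (Fin 3) (Fin 3) ℝ)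
    (hCsymm : ∀ t, 0 < t → t < a → (C t).IsSymm)
    (hCapprox : ∀ t, 0 < t → t < a → ∀ i j, |t * C t i j - C0mat i j| ≤ K * t)
    (hRapprox : ∀ t, 0 < t → t < a → ∀ i j, |R t i j - R0mat i j| ≤ K * t) :
    ∃ α₀, 0 < α₀ ∧ α₀ ≤ a ∧
      ∀ t, 0 < t → t < α₀ →
        IsUnit (Smat C R t) ∧ ∀ i j, 0 < (Smat C R t)⁻¹ i j :=
  inverse_stiffness_entrywise_pos_general a K ha C R hCapprox hRapprox
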